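/- arXiv:2402.11613 — 3 statements merged into one kernel-verified Lean document; each statement's English description precedes it below -/
import Mathlib

section
/- Given a short exact sequence 0 → L →a M →b N → 0 of A-modules with ωN = 0, and any A-module homomorphism f : L → T, there exists an A-module homomorphism h : M → ᵗT (the σ-twist of T) satisfying h ∘ a = ω_T ∘ f, where ω_T : T → ᵗT sends t to σ-twist of ωt. -/
/-!
STATEMENT 1: Given a short exact sequence `0 → L →a M →b N → 0` of `A`-modules with
`ω • N = 0`, and any `A`-linear map `f : L → T`, there is an `A`-linear map
`h : M → ᵗT` (equivalently, a `σ`-semilinear map `M → T`) with `h ∘ a = ω_T ∘ f`,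
where `ω_T : T → ᵗT` is `t ↦ ω • t`.
-/

universe u v

theorem exists_semilinear_factorization {A : Type u} [Ring A] (ω : A) (σ : A ≃+* A)
    (hσ : ∀ a : A, ω * a = σ a * ω)
    (hreg : ∀ a : A, a * ω = 0 → a = 0) (hreg' : ∀ a : A, ω * a = 0 → a = 0)
    {L M N T : Type v} [AddCommGroup L] [Module A L] [AddCommGroup M] [Module A M]
    [AddCommGroup N] [Module A N] [AddCommGroup T] [Module A T]
    (a : L →ₗ[A] M) (b : M →ₗ[A] N)
    (ha : Function.Injective a) (hb : Function.Surjective b)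
    (hex : LinearMap.range a = LinearMap.ker b)
    (hN : ∀ n : N, ω • n = 0)
    (f : L →ₗ[A] T) :
    ∃ h : M →ₛₗ[(σ : A →+* A)] T, ∀ l : L, h (a l) = ω • f l := by
  have key : ∀ m : M, ∃ l : L, a l = ω • m := by
    intro m
    have : ω • m ∈ LinearMap.ker b := by
      simp [LinearMap.mem_ker, map_smul, hN]
    rw [← hex] at this
    exact this
  choose g hg using key
  refine ⟨{ toFun := fun m => f (g m),
            map_add' := ?_, map_smul' := ?_ }, ?_⟩
  · intro x y
    have h1 : g (x + y) = g x + g y := ha (by rw [hg, map_add, hg, hg, smul_add])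
    show f (g (x + y)) = f (g x) + f (g y)
    rw [h1, map_add]
  · intro c m
    have h1 : g (c • m) = σ c • g m := ha (by
      rw [hg, map_smul, hg, smul_smul, smul_smul, hσ])
    show f (g (c • m)) = σ c • f (g m)
    rw [h1, map_smul]
  · intro l
    have h1 : g (a l) = ω • l := ha (by rw [hg, map_smul])
    simp [h1, map_smul]
end

section
/- The category F(A; ω) of module factorizations of ω over A is equivalent to the category of left modules over the matrix ring Γ = [[A, A], [Aω, A]] (the subring of M₂(A) with lower-left entries in Aω). The equivalence sends a factorization X = (X⁰, X¹; d⁰, d¹) to the column module (X¹; X⁰) with Γ-action defined using d⁰ and d¹. -/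
/-!
STATEMENT 10: The category `F(A; ω)` of module factorizations of `ω` over `A` is
equivalent to the category of left modules over the matrix ring
`Γ = [[A, A], [Aω, A]] ⊆ M₂(A)`, via `X = (X⁰, X¹; d⁰, d¹) ↦ (X¹; X⁰)` with the
`Γ`-action defined using `d⁰` and `d¹`.  The equivalence is expressed elementarily:
the functor `Φ` is well defined on morphisms, fully faithful, and dense.
-/

universe u v

/-- A module factorization `X = (X⁰, X¹; d⁰, d¹)` of `ω` over `A`: `d⁰ : X⁰ → X¹` is
`A`-linear and `d¹ : X¹ → ᵗ(X⁰)` is `A`-linear, i.e. `d¹ : X¹ → X⁰` is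
`σ`-semilinear, with `d¹ ∘ d⁰ = ω_{X⁰}` and `ᵗ(d⁰) ∘ d¹ = ω_{X¹}`. -/
structure MFact (A : Type u) [Ring A] (ω : A) (σ : A ≃+* A) : Type (max u (v + 1)) where
  X0 : ModuleCat.{v} A
  X1 : ModuleCat.{v} A
  d0 : X0 →ₗ[A] X1
  d1 : X1 →ₛₗ[(σ : A →+* A)] X0
  comp01 : ∀ x : X0, d1 (d0 x) = ω • x
  comp10 : ∀ x : X1, d0 (d1 x) = ω • x

variable {A : Type u} [Ring A] {ω : A} {σ : A ≃+* A}

/-- A morphism of module factorizations. -/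
@[ext] structure MFactHom (X Y : MFact.{u, v} A ω σ) where
  f0 : X.X0 →ₗ[A] Y.X0
  f1 : X.X1 →ₗ[A] Y.X1
  comm0 : ∀ x : X.X0, f1 (X.d0 x) = Y.d0 (f0 x)
  comm1 : ∀ x : X.X1, f0 (X.d1 x) = Y.d1 (f1 x)

/-- Composition of morphisms of module factorizations. -/
def MFactHom.comp {X Y Z : MFact.{u, v} A ω σ} (g : MFactHom Y Z) (f : MFactHom X Y) :
    MFactHom X Z where
  f0 := g.f0 ∘ₗ f.f0
  f1 := g.f1 ∘ₗ f.f1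
  comm0 := fun x => by
    simp only [LinearMap.comp_apply, f.comm0 x, g.comm0 (f.f0 x)]
  comm1 := fun x => by
    simp only [LinearMap.comp_apply, f.comm1 x, g.comm1 (f.f1 x)]

variable (ω σ)

/-- The trivial module factorization `θ⁰(M) = (M, M; Id_M, ω_M)`. -/
def theta0 (hσ : ∀ a : A, ω * a = σ a * ω)
    (M : Type v) [AddCommGroup M] [Module A M] : MFact.{u, v} A ω σ where
  X0 := ModuleCat.of A M
  X1 := ModuleCat.of A M
  d0 := LinearMap.id
  d1 :=
    { toFun := fun m => ω • m
      map_add' := fun x y => smul_add ω x y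
      map_smul' := fun a m => by
        simp only [RingHom.coe_coe]
        rw [smul_smul, smul_smul, hσ] }
  comp01 := fun x => rfl
  comp10 := fun x => rfl

/-- The matrix ring `Γ = [[A, A], [Aω, A]]`, as a subring of the ring of `2 × 2`
matrices over `A`: the lower-left entry is required to lie in `Aω`. -/
def Gamma {A : Type u} [Ring A] (ω : A) (σ : A ≃+* A)
    (hσ : ∀ a : A, ω * a = σ a * ω) : Subring (Matrix (Fin 2) (Fin 2) A) where
  carrier := {m | ∃ a : A, m 1 0 = a * ω}
  zero_mem' := ⟨0, by simp⟩
  one_mem' := ⟨0, by simp [Matrix.one_apply]⟩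
  add_mem' := by
    rintro m n ⟨a, ha⟩ ⟨b, hb⟩
    exact ⟨a + b, by simp [Matrix.add_apply, ha, hb, add_mul]⟩
  neg_mem' := by
    rintro m ⟨a, ha⟩
    exact ⟨-a, by simp [Matrix.neg_apply, ha, neg_mul]⟩
  mul_mem' := by
    rintro m n ⟨a, ha⟩ ⟨b, hb⟩
    refine ⟨a * σ (n 0 0) + m 1 1 * b, ?_⟩
    rw [Matrix.mul_apply, Fin.sum_univ_two, ha, hb, add_mul,
      mul_assoc a ω (n 0 0), hσ (n 0 0), ← mul_assoc, ← mul_assoc]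

/-- The chosen `a₂₁` with `(m : Matrix) 1 0 = a₂₁ * ω`, for `m ∈ Γ`. -/
noncomputable def lowEntry {A : Type u} [Ring A] {ω : A} {σ : A ≃+* A}
    {hσ : ∀ a : A, ω * a = σ a * ω} (m : Gamma ω σ hσ) : A :=
  Classical.choose
    (show ∃ a : A, (m : Matrix (Fin 2) (Fin 2) A) 1 0 = a * ω from m.2)

theorem lowEntry_spec {A : Type u} [Ring A] {ω : A} {σ : A ≃+* A}
    {hσ : ∀ a : A, ω * a = σ a * ω} (m : Gamma ω σ hσ) :
    (m : Matrix (Fin 2) (Fin 2) A) 1 0 = lowEntry m * ω :=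
  Classical.choose_spec
    (show ∃ a : A, (m : Matrix (Fin 2) (Fin 2) A) 1 0 = a * ω from m.2)

theorem lowEntry_unique {A : Type u} [Ring A] {ω : A} {σ : A ≃+* A}
    {hσ : ∀ a : A, ω * a = σ a * ω} (hreg : ∀ a : A, a * ω = 0 → a = 0)
    (m : Gamma ω σ hσ) (a : A) (h : (m : Matrix (Fin 2) (Fin 2) A) 1 0 = a * ω) :
    lowEntry m = a := by
  have h2 : (lowEntry m - a) * ω = 0 := by
    rw [sub_mul, ← h, lowEntry_spec m, sub_self]
  have := hreg _ h2
  rwa [sub_eq_zero] at this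

variable {A : Type u} [Ring A] {ω : A} {σ : A ≃+* A}

/-- The `Γ`-action on `Φ(X) = (X¹; X⁰)`:
`[[a₁₁, a₁₂],[a₂₁ω, a₂₂]] • (x¹, x⁰) = (a₁₁x¹ + a₁₂·d⁰(x⁰), a₂₁·d¹(x¹) + a₂₂x⁰)`. -/
noncomputable def phiSMul (hσ : ∀ a : A, ω * a = σ a * ω) (X : MFact.{u, v} A ω σ) :
    SMul (Gamma ω σ hσ) (X.X1 × X.X0) :=
  ⟨fun m p =>
    ((m : Matrix (Fin 2) (Fin 2) A) 0 0 • p.1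
        + (m : Matrix (Fin 2) (Fin 2) A) 0 1 • X.d0 p.2,
      lowEntry m • X.d1 p.1 + (m : Matrix (Fin 2) (Fin 2) A) 1 1 • p.2)⟩

/-- `Φ(X) = (X¹; X⁰)` is a left `Γ`-module. -/
noncomputable def phiModule (hσ : ∀ a : A, ω * a = σ a * ω)
    (hreg : ∀ a : A, a * ω = 0 → a = 0) (X : MFact.{u, v} A ω σ) :
    Module (Gamma ω σ hσ) (X.X1 × X.X0) :=
  letI := phiSMul hσ X
  Module.ofMinimalAxioms
    (fun m p q => by
      show ((m : Matrix (Fin 2) (Fin 2) A) 0 0 • (p.1 + q.1)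
              + (m : Matrix (Fin 2) (Fin 2) A) 0 1 • X.d0 (p.2 + q.2),
            lowEntry m • X.d1 (p.1 + q.1)
              + (m : Matrix (Fin 2) (Fin 2) A) 1 1 • (p.2 + q.2)) = _
      rw [map_add, map_add, smul_add, smul_add, smul_add, smul_add]
      show _ = ((m : Matrix (Fin 2) (Fin 2) A) 0 0 • p.1
              + (m : Matrix (Fin 2) (Fin 2) A) 0 1 • X.d0 p.2
              + ((m : Matrix (Fin 2) (Fin 2) A) 0 0 • q.1
              + (m : Matrix (Fin 2) (Fin 2) A) 0 1 • X.d0 q.2),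
            lowEntry m • X.d1 p.1 + (m : Matrix (Fin 2) (Fin 2) A) 1 1 • p.2
              + (lowEntry m • X.d1 q.1 + (m : Matrix (Fin 2) (Fin 2) A) 1 1 • q.2))
      ext <;> dsimp <;> abel)
    (fun m n p => by
      have hlow : lowEntry (m + n) = lowEntry m + lowEntry n := by
        refine lowEntry_unique hreg _ _ ?_
        show ((m : Matrix (Fin 2) (Fin 2) A) + (n : Matrix (Fin 2) (Fin 2) A)) 1 0 = _
        rw [Matrix.add_apply, lowEntry_spec m, lowEntry_spec n, add_mul]
      show (((m + n : Gamma ω σ hσ) : Matrix (Fin 2) (Fin 2) A) 0 0 • p.1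
              + ((m + n : Gamma ω σ hσ) : Matrix (Fin 2) (Fin 2) A) 0 1 • X.d0 p.2,
            lowEntry (m + n) • X.d1 p.1
              + ((m + n : Gamma ω σ hσ) : Matrix (Fin 2) (Fin 2) A) 1 1 • p.2) = _
      show (((m : Matrix (Fin 2) (Fin 2) A) + (n : Matrix (Fin 2) (Fin 2) A)) 0 0 • p.1
              + ((m : Matrix (Fin 2) (Fin 2) A) + (n : Matrix (Fin 2) (Fin 2) A)) 0 1 • X.d0 p.2,
            lowEntry (m + n) • X.d1 p.1
              + ((m : Matrix (Fin 2) (Fin 2) A) + (n : Matrix (Fin 2) (Fin 2) A)) 1 1 • p.2) = _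
      rw [hlow, Matrix.add_apply, Matrix.add_apply, Matrix.add_apply,
        add_smul, add_smul, add_smul, add_smul]
      show _ = ((m : Matrix (Fin 2) (Fin 2) A) 0 0 • p.1
              + (m : Matrix (Fin 2) (Fin 2) A) 0 1 • X.d0 p.2
              + ((n : Matrix (Fin 2) (Fin 2) A) 0 0 • p.1
              + (n : Matrix (Fin 2) (Fin 2) A) 0 1 • X.d0 p.2),
            lowEntry m • X.d1 p.1 + (m : Matrix (Fin 2) (Fin 2) A) 1 1 • p.2
              + (lowEntry n • X.d1 p.1 + (n : Matrix (Fin 2) (Fin 2) A) 1 1 • p.2))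
      ext <;> dsimp <;> abel)
    (fun m n p => by
      have hmul : ((m * n : Gamma ω σ hσ) : Matrix (Fin 2) (Fin 2) A)
          = (m : Matrix (Fin 2) (Fin 2) A) * (n : Matrix (Fin 2) (Fin 2) A) := rfl
      have hlowmn : lowEntry (m * n)
          = lowEntry m * σ ((n : Matrix (Fin 2) (Fin 2) A) 0 0)
            + (m : Matrix (Fin 2) (Fin 2) A) 1 1 * lowEntry n := by
        refine lowEntry_unique hreg _ _ ?_
        rw [hmul, Matrix.mul_apply, Fin.sum_univ_two, lowEntry_spec m, lowEntry_spec n,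
          add_mul, mul_assoc (lowEntry m) ω _, hσ _, ← mul_assoc, ← mul_assoc]
      show (((m * n : Gamma ω σ hσ) : Matrix (Fin 2) (Fin 2) A) 0 0 • p.1
              + ((m * n : Gamma ω σ hσ) : Matrix (Fin 2) (Fin 2) A) 0 1 • X.d0 p.2,
            lowEntry (m * n) • X.d1 p.1
              + ((m * n : Gamma ω σ hσ) : Matrix (Fin 2) (Fin 2) A) 1 1 • p.2)
          = ((m : Matrix (Fin 2) (Fin 2) A) 0 0
                • ((n : Matrix (Fin 2) (Fin 2) A) 0 0 • p.1
                  + (n : Matrix (Fin 2) (Fin 2) A) 0 1 • X.d0 p.2)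
              + (m : Matrix (Fin 2) (Fin 2) A) 0 1
                • X.d0 (lowEntry n • X.d1 p.1
                  + (n : Matrix (Fin 2) (Fin 2) A) 1 1 • p.2),
            lowEntry m
                • X.d1 ((n : Matrix (Fin 2) (Fin 2) A) 0 0 • p.1
                  + (n : Matrix (Fin 2) (Fin 2) A) 0 1 • X.d0 p.2)
              + (m : Matrix (Fin 2) (Fin 2) A) 1 1
                • (lowEntry n • X.d1 p.1
                  + (n : Matrix (Fin 2) (Fin 2) A) 1 1 • p.2))
      rw [hmul, hlowmn]
      refine Prod.ext ?_ ?_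
      · dsimp only
        rw [map_add, map_smul, map_smul, X.comp10 p.1]
        simp only [Matrix.mul_apply, Fin.sum_univ_two, lowEntry_spec n,
          smul_add, smul_smul, add_smul, mul_assoc]
        abel
      · dsimp only
        rw [map_add, X.d1.map_smulₛₗ, X.d1.map_smulₛₗ, X.comp01 p.2]
        simp only [RingHom.coe_coe, smul_add, smul_smul, add_smul,
          Matrix.mul_apply, Fin.sum_univ_two, lowEntry_spec m]
        rw [← hσ ((n : Matrix (Fin 2) (Fin 2) A) 0 1)]
        simp only [mul_assoc]
        abel)
    (fun p => by
      have h1 : ((1 : Gamma ω σ hσ) : Matrix (Fin 2) (Fin 2) A) = 1 := rfl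
      have hlow : lowEntry (1 : Gamma ω σ hσ) = 0 := by
        refine lowEntry_unique hreg _ _ ?_
        rw [h1, zero_mul]
        simp [Matrix.one_apply]
      show (((1 : Gamma ω σ hσ) : Matrix (Fin 2) (Fin 2) A) 0 0 • p.1
              + ((1 : Gamma ω σ hσ) : Matrix (Fin 2) (Fin 2) A) 0 1 • X.d0 p.2,
            lowEntry (1 : Gamma ω σ hσ) • X.d1 p.1
              + ((1 : Gamma ω σ hσ) : Matrix (Fin 2) (Fin 2) A) 1 1 • p.2) = p
      rw [hlow, h1]
      simp [Matrix.one_apply])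


/-!
The diagonal idempotents `e = diag(1, 0)` and `f = diag(0, 1)` of `Γ` split every `Γ`-module as
`M = eM ⊕ fM`, and the corner rings `eΓe ≅ A ≅ fΓf` make both summands `A`-modules. The elements
`E₁₂` and `ωE₂₁` of `Γ` then act as `d⁰ : fM → eM` and `d¹ : eM → fM`; `d¹` is `σ`-semilinear
because `ωE₂₁ · diag(a, 0) = diag(0, σ a) · ωE₂₁`, and both composites are multiplication by `ω`.
Conversely, a `Γ`-linear map commutes with `e` and `f`, so it is a pair of `A`-linear maps, and
commuting with `E₁₂` and `ωE₂₁` is exactly compatibility with `d⁰` and `d¹`. Regularity of `ω`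
makes `a₂₁` in the lower-left entry `a₂₁ω` unique, which is what lets us compute the action of
these special elements on `(X¹; X⁰)`.
-/

section Corner

variable {R : Type*} [Ring R] (M : Type*) [AddCommGroup M] [Module R M]

/-- The corner `eM` of `M` at the idempotent `e = φ 1`; it is an `A`-module through `φ`,
which maps `A` into the corner ring `eRe`. -/
def cornerSubgroup (φ : A →ₙ+* R) : AddSubgroup M where
  carrier := {x | φ 1 • x = x}
  zero_mem' := smul_zero _
  add_mem' {x y} (hx : φ 1 • x = x) (hy : φ 1 • y = y) :=
    show φ 1 • (x + y) = x + y by rw [smul_add, hx, hy]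
  neg_mem' {x} (hx : φ 1 • x = x) := show φ 1 • -x = -x by rw [smul_neg, hx]

variable {M} {φ : A →ₙ+* R}

theorem smul_mem_cornerSubgroup {r : R} (hr : φ 1 * r = r) (x : M) :
    r • x ∈ cornerSubgroup M φ :=
  show φ 1 • r • x = r • x by rw [smul_smul, hr]

instance : SMul A (cornerSubgroup M φ) :=
  ⟨fun a x => ⟨φ a • (x : M), smul_mem_cornerSubgroup (by rw [← map_mul, one_mul]) _⟩⟩

@[simp] theorem cornerSubgroup.coe_smul (a : A) (x : cornerSubgroup M φ) :
    ((a • x : cornerSubgroup M φ) : M) = φ a • (x : M) := rfl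

instance : Module A (cornerSubgroup M φ) :=
  Module.ofMinimalAxioms
    (fun a x y => Subtype.ext (smul_add _ _ _))
    (fun a b x => Subtype.ext (by simp only [cornerSubgroup.coe_smul, map_add, add_smul,
      AddSubgroup.coe_add]))
    (fun a b x => Subtype.ext (by simp only [cornerSubgroup.coe_smul, map_mul, mul_smul]))
    (fun x => Subtype.ext x.2)

variable {ψ : A →ₙ+* R}

def cornerMap (τ : A →+* A) (r : R) (hr : φ 1 * r = r) (hτ : ∀ a, r * ψ a = φ (τ a) * r) :
    cornerSubgroup M ψ →ₛₗ[τ] cornerSubgroup M φ where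
  toFun x := ⟨r • (x : M), smul_mem_cornerSubgroup hr _⟩
  map_add' x y := Subtype.ext (smul_add _ _ _)
  map_smul' a x := Subtype.ext (by simp only [cornerSubgroup.coe_smul, smul_smul, hτ])

@[simp] theorem cornerMap_apply_coe (τ : A →+* A) (r : R) (hr : φ 1 * r = r)
    (hτ : ∀ a, r * ψ a = φ (τ a) * r) (x : cornerSubgroup M ψ) :
    (cornerMap τ r hr hτ x : M) = r • (x : M) := rfl

theorem smul_coe_cornerSubgroup (r : R) (x : cornerSubgroup M φ) :
    r • (x : M) = (r * φ 1) • (x : M) := by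
  rw [mul_smul, x.2]

def cornerProdAddEquiv (h_add : φ 1 + ψ 1 = 1) (hφψ : φ 1 * ψ 1 = 0) (hψφ : ψ 1 * φ 1 = 0) :
    cornerSubgroup M φ × cornerSubgroup M ψ ≃+ M where
  toFun p := p.1 + p.2
  invFun x := (⟨φ 1 • x, smul_mem_cornerSubgroup (by rw [← map_mul, one_mul]) x⟩,
    ⟨ψ 1 • x, smul_mem_cornerSubgroup (by rw [← map_mul, one_mul]) x⟩)
  left_inv p := by
    ext
    · change φ 1 • ((p.1 : M) + p.2) = p.1
      rw [smul_add, p.1.2, smul_coe_cornerSubgroup _ p.2, hφψ, zero_smul, add_zero]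
    · change ψ 1 • ((p.1 : M) + p.2) = p.2
      rw [smul_add, p.2.2, smul_coe_cornerSubgroup _ p.1, hψφ, zero_smul, zero_add]
  right_inv x := show φ 1 • x + ψ 1 • x = x by rw [← add_smul, h_add, one_smul]
  map_add' p q := by
    simp only [Prod.fst_add, Prod.snd_add, AddSubgroup.coe_add]
    abel

end Corner

namespace Gamma

variable (hσ : ∀ a : A, ω * a = σ a * ω)

theorem ext_entries {m n : Gamma ω σ hσ}
    (h : ∀ i j, (m : Matrix (Fin 2) (Fin 2) A) i j = (n : Matrix (Fin 2) (Fin 2) A) i j) :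
    m = n :=
  Subtype.ext (Matrix.ext h)

def diagInl : A →ₙ+* Gamma ω σ hσ where
  toFun a := ⟨!![a, 0; 0, 0], 0, by simp⟩
  map_zero' := ext_entries hσ fun i j => by fin_cases i <;> fin_cases j <;> rfl
  map_add' a b := ext_entries hσ fun i j => by fin_cases i <;> fin_cases j <;> simp
  map_mul' a b := ext_entries hσ fun i j => by fin_cases i <;> fin_cases j <;> simp

def diagInr : A →ₙ+* Gamma ω σ hσ where
  toFun a := ⟨!![0, 0; 0, a], 0, by simp⟩
  map_zero' := ext_entries hσ fun i j => by fin_cases i <;> fin_cases j <;> rfl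
  map_add' a b := ext_entries hσ fun i j => by fin_cases i <;> fin_cases j <;> simp
  map_mul' a b := ext_entries hσ fun i j => by fin_cases i <;> fin_cases j <;> simp

def upper : Gamma ω σ hσ := ⟨!![0, 1; 0, 0], 0, by simp⟩

def lower : Gamma ω σ hσ := ⟨!![0, 0; ω, 0], 1, by simp⟩

@[simp] theorem coe_diagInl (a : A) :
    (diagInl hσ a : Matrix (Fin 2) (Fin 2) A) = !![a, 0; 0, 0] := rfl

@[simp] theorem coe_diagInr (a : A) :
    (diagInr hσ a : Matrix (Fin 2) (Fin 2) A) = !![0, 0; 0, a] := rfl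

@[simp] theorem coe_upper : (upper hσ : Matrix (Fin 2) (Fin 2) A) = !![0, 1; 0, 0] := rfl

@[simp] theorem coe_lower : (lower hσ : Matrix (Fin 2) (Fin 2) A) = !![0, 0; ω, 0] := rfl

theorem diagInl_one_add_diagInr_one : diagInl hσ 1 + diagInr hσ 1 = 1 :=
  ext_entries hσ fun i j => by
    fin_cases i <;> fin_cases j <;> simp

theorem diagInl_one_mul_diagInr_one : diagInl hσ 1 * diagInr hσ 1 = 0 :=
  ext_entries hσ fun i j => by fin_cases i <;> fin_cases j <;> simp

theorem diagInr_one_mul_diagInl_one : diagInr hσ 1 * diagInl hσ 1 = 0 :=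
  ext_entries hσ fun i j => by fin_cases i <;> fin_cases j <;> simp

theorem diagInl_one_mul_upper : diagInl hσ 1 * upper hσ = upper hσ :=
  ext_entries hσ fun i j => by fin_cases i <;> fin_cases j <;> simp

theorem diagInr_one_mul_lower : diagInr hσ 1 * lower hσ = lower hσ :=
  ext_entries hσ fun i j => by fin_cases i <;> fin_cases j <;> simp

theorem upper_mul_diagInr (a : A) : upper hσ * diagInr hσ a = diagInl hσ a * upper hσ :=
  ext_entries hσ fun i j => by
    fin_cases i <;> fin_cases j <;> simp

theorem lower_mul_diagInl (a : A) : lower hσ * diagInl hσ a = diagInr hσ (σ a) * lower hσ :=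
  ext_entries hσ fun i j => by
    fin_cases i <;> fin_cases j <;> simp [hσ a]

theorem lower_mul_upper : lower hσ * upper hσ = diagInr hσ ω :=
  ext_entries hσ fun i j => by
    fin_cases i <;> fin_cases j <;> simp

theorem upper_mul_lower : upper hσ * lower hσ = diagInl hσ ω :=
  ext_entries hσ fun i j => by
    fin_cases i <;> fin_cases j <;> simp

theorem mul_diagInl_one (m : Gamma ω σ hσ) :
    m * diagInl hσ 1 = diagInl hσ ((m : Matrix (Fin 2) (Fin 2) A) 0 0)
      + diagInr hσ (lowEntry m) * lower hσ :=
  ext_entries hσ fun i j => by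
    fin_cases i <;> fin_cases j <;> simp [Matrix.mul_apply, lowEntry_spec m]

theorem mul_diagInr_one (m : Gamma ω σ hσ) :
    m * diagInr hσ 1 = diagInl hσ ((m : Matrix (Fin 2) (Fin 2) A) 0 1) * upper hσ
      + diagInr hσ ((m : Matrix (Fin 2) (Fin 2) A) 1 1) :=
  ext_entries hσ fun i j => by
    fin_cases i <;> fin_cases j <;> simp [Matrix.mul_apply]

end Gamma

section PhiAction

variable (hσ : ∀ a : A, ω * a = σ a * ω) (hreg : ∀ a : A, a * ω = 0 → a = 0)
  (X : MFact.{u, v} A ω σ)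

theorem phiModule_smul (m : Gamma ω σ hσ) (p : X.X1 × X.X0) :
    (letI := phiModule hσ hreg X; m • p) =
      ((m : Matrix (Fin 2) (Fin 2) A) 0 0 • p.1 + (m : Matrix (Fin 2) (Fin 2) A) 0 1 • X.d0 p.2,
        lowEntry m • X.d1 p.1 + (m : Matrix (Fin 2) (Fin 2) A) 1 1 • p.2) :=
  rfl

theorem phiModule_diagInl_smul (a : A) (p : X.X1 × X.X0) :
    (letI := phiModule hσ hreg X; Gamma.diagInl hσ a • p) = (a • p.1, 0) := by
  rw [phiModule_smul, lowEntry_unique hreg _ 0 (by simp)]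
  simp

theorem phiModule_diagInr_smul (a : A) (p : X.X1 × X.X0) :
    (letI := phiModule hσ hreg X; Gamma.diagInr hσ a • p) = (0, a • p.2) := by
  rw [phiModule_smul, lowEntry_unique hreg _ 0 (by simp)]
  simp

theorem phiModule_upper_smul (p : X.X1 × X.X0) :
    (letI := phiModule hσ hreg X; Gamma.upper hσ • p) = (X.d0 p.2, 0) := by
  rw [phiModule_smul, lowEntry_unique hreg _ 0 (by simp)]
  simp

theorem phiModule_lower_smul (p : X.X1 × X.X0) :
    (letI := phiModule hσ hreg X; Gamma.lower hσ • p) = (0, X.d1 p.1) := by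
  rw [phiModule_smul, lowEntry_unique hreg _ 1 (by simp)]
  simp

theorem phiModule_diagInl_add_diagInr_smul (a : A) (p : X.X1 × X.X0) :
    (letI := phiModule hσ hreg X; (Gamma.diagInl hσ a + Gamma.diagInr hσ a) • p) = a • p := by
  let := phiModule hσ hreg X
  rw [add_smul, phiModule_diagInl_smul, phiModule_diagInr_smul, Prod.mk_add_mk, add_zero,
    zero_add, Prod.smul_def]

end PhiAction

section Morphisms

variable (hσ : ∀ a : A, ω * a = σ a * ω) (hreg : ∀ a : A, a * ω = 0 → a = 0)
  {X Y : MFact.{u, v} A ω σ}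

noncomputable def MFactHom.toGammaLinear (f : MFactHom X Y) :
    letI := phiModule hσ hreg X
    letI := phiModule hσ hreg Y
    (X.X1 × X.X0) →ₗ[Gamma ω σ hσ] (Y.X1 × Y.X0) :=
  letI := phiModule hσ hreg X
  letI := phiModule hσ hreg Y
  { toFun p := (f.f1 p.1, f.f0 p.2)
    map_add' p q := by simp only [Prod.fst_add, Prod.snd_add, map_add, Prod.mk_add_mk]
    map_smul' m p := by
      simp only [phiModule_smul, RingHom.id_apply, map_add, map_smul, f.comm0, f.comm1] }

variable {hσ hreg}

theorem gammaLinear_apply_fst_zero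
    (g : letI := phiModule hσ hreg X
      letI := phiModule hσ hreg Y
      (X.X1 × X.X0) →ₗ[Gamma ω σ hσ] (Y.X1 × Y.X0)) (p : X.X1 × X.X0) :
    g (p.1, 0) = ((g p).1, 0) := by
  let := phiModule hσ hreg X
  let := phiModule hσ hreg Y
  have := map_smul g (Gamma.diagInl hσ 1) p
  rwa [phiModule_diagInl_smul, phiModule_diagInl_smul, one_smul, one_smul] at this

theorem gammaLinear_apply_zero_snd
    (g : letI := phiModule hσ hreg X
      letI := phiModule hσ hreg Y
      (X.X1 × X.X0) →ₗ[Gamma ω σ hσ] (Y.X1 × Y.X0)) (p : X.X1 × X.X0) :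
    g (0, p.2) = (0, (g p).2) := by
  let := phiModule hσ hreg X
  let := phiModule hσ hreg Y
  have := map_smul g (Gamma.diagInr hσ 1) p
  rwa [phiModule_diagInr_smul, phiModule_diagInr_smul, one_smul, one_smul] at this

noncomputable def gammaLinearRestrictScalars
    (g : letI := phiModule hσ hreg X
      letI := phiModule hσ hreg Y
      (X.X1 × X.X0) →ₗ[Gamma ω σ hσ] (Y.X1 × Y.X0)) :
    (X.X1 × X.X0) →ₗ[A] (Y.X1 × Y.X0) :=
  letI := phiModule hσ hreg X
  letI := phiModule hσ hreg Y
  { toFun := g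
    map_add' := g.map_add
    map_smul' a p := by
      rw [← phiModule_diagInl_add_diagInr_smul hσ hreg, map_smul,
        phiModule_diagInl_add_diagInr_smul hσ hreg, RingHom.id_apply] }

noncomputable def MFactHom.ofGammaLinear
    (g : letI := phiModule hσ hreg X
      letI := phiModule hσ hreg Y
      (X.X1 × X.X0) →ₗ[Gamma ω σ hσ] (Y.X1 × Y.X0)) : MFactHom X Y where
  f0 := LinearMap.snd A Y.X1 Y.X0 ∘ₗ gammaLinearRestrictScalars g ∘ₗ LinearMap.inr A X.X1 X.X0
  f1 := LinearMap.fst A Y.X1 Y.X0 ∘ₗ gammaLinearRestrictScalars g ∘ₗ LinearMap.inl A X.X1 X.X0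
  comm0 x := by
    let := phiModule hσ hreg X
    let := phiModule hσ hreg Y
    have := map_smul g (Gamma.upper hσ) (0, x)
    rw [phiModule_upper_smul, phiModule_upper_smul] at this
    exact congrArg Prod.fst this
  comm1 x := by
    let := phiModule hσ hreg X
    let := phiModule hσ hreg Y
    have := map_smul g (Gamma.lower hσ) (x, 0)
    rw [phiModule_lower_smul, phiModule_lower_smul] at this
    exact congrArg Prod.snd this

theorem gammaLinear_apply_eq_ofGammaLinear
    (g : letI := phiModule hσ hreg X
      letI := phiModule hσ hreg Y
      (X.X1 × X.X0) →ₗ[Gamma ω σ hσ] (Y.X1 × Y.X0)) (p : X.X1 × X.X0) :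
    g p = ((MFactHom.ofGammaLinear g).f1 p.1, (MFactHom.ofGammaLinear g).f0 p.2) := by
  change g p = ((g (p.1, 0)).1, (g (0, p.2)).2)
  rw [gammaLinear_apply_fst_zero, gammaLinear_apply_zero_snd]

end Morphisms

theorem MFactHom.ext_of_prod_apply {X Y : MFact.{u, v} A ω σ} {f f' : MFactHom X Y}
    (h : ∀ p : X.X1 × X.X0, (f.f1 p.1, f.f0 p.2) = (f'.f1 p.1, f'.f0 p.2)) : f = f' :=
  MFactHom.ext (LinearMap.ext fun x => congrArg Prod.snd (h (0, x)))
    (LinearMap.ext fun x => congrArg Prod.fst (h (x, 0)))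

section GammaModule

variable (hσ : ∀ a : A, ω * a = σ a * ω) (M : Type v) [AddCommGroup M]
  [Module (Gamma ω σ hσ) M]

def MFact.ofGammaModule : MFact.{u, v} A ω σ where
  X0 := ModuleCat.of A (cornerSubgroup M (Gamma.diagInr hσ))
  X1 := ModuleCat.of A (cornerSubgroup M (Gamma.diagInl hσ))
  d0 := cornerMap (RingHom.id A) (Gamma.upper hσ) (Gamma.diagInl_one_mul_upper hσ)
    (Gamma.upper_mul_diagInr hσ)
  d1 := cornerMap (σ : A →+* A) (Gamma.lower hσ) (Gamma.diagInr_one_mul_lower hσ)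
    (Gamma.lower_mul_diagInl hσ)
  comp01 x := Subtype.ext <|
    show Gamma.lower hσ • Gamma.upper hσ • (x : M) = Gamma.diagInr hσ ω • (x : M) by
      rw [smul_smul, Gamma.lower_mul_upper]
  comp10 x := Subtype.ext <|
    show Gamma.upper hσ • Gamma.lower hσ • (x : M) = Gamma.diagInl hσ ω • (x : M) by
      rw [smul_smul, Gamma.upper_mul_lower]

variable (hreg : ∀ a : A, a * ω = 0 → a = 0)

noncomputable def MFact.phiOfGammaModuleEquiv :
    letI := phiModule hσ hreg (MFact.ofGammaModule hσ M)
    ((MFact.ofGammaModule hσ M).X1 × (MFact.ofGammaModule hσ M).X0) ≃ₗ[Gamma ω σ hσ] M :=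
  letI := phiModule hσ hreg (MFact.ofGammaModule hσ M)
  (cornerProdAddEquiv (Gamma.diagInl_one_add_diagInr_one hσ)
    (Gamma.diagInl_one_mul_diagInr_one hσ) (Gamma.diagInr_one_mul_diagInl_one hσ)).toLinearEquiv
    fun m p => by
      change Subtype.val (m • p).1 + Subtype.val (m • p).2
        = m • (Subtype.val p.1 + Subtype.val p.2)
      rw [phiModule_smul, smul_add, smul_coe_cornerSubgroup m p.1,
        smul_coe_cornerSubgroup m p.2, Gamma.mul_diagInl_one, Gamma.mul_diagInr_one]
      simp only [add_smul, mul_smul]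
      change Gamma.diagInl hσ _ • Subtype.val p.1 + Gamma.diagInl hσ _ • Gamma.upper hσ •
          Subtype.val p.2 + (Gamma.diagInr hσ (lowEntry m) • Gamma.lower hσ • Subtype.val p.1 +
          Gamma.diagInr hσ _ • Subtype.val p.2) = _
      abel

end GammaModule

theorem factorizations_equiv_gamma_modules_general
    (hσ : ∀ a : A, ω * a = σ a * ω)
    (hreg : ∀ a : A, a * ω = 0 → a = 0) :
    -- `Φ` is well defined on morphisms, and fully faithful
    (∀ X Y : MFact.{u, v} A ω σ,
      letI := phiModule hσ hreg X
      letI := phiModule hσ hreg Y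
      (∀ f : MFactHom X Y,
        ∃ g : (X.X1 × X.X0) →ₗ[Gamma ω σ hσ] (Y.X1 × Y.X0),
          ∀ p : X.X1 × X.X0, g p = (f.f1 p.1, f.f0 p.2)) ∧
      (∀ g : (X.X1 × X.X0) →ₗ[Gamma ω σ hσ] (Y.X1 × Y.X0),
        ∃! f : MFactHom X Y, ∀ p : X.X1 × X.X0, g p = (f.f1 p.1, f.f0 p.2))) ∧
    -- `Φ` is dense
    (∀ (M : Type v) [AddCommGroup M] [Module (Gamma ω σ hσ) M],
      ∃ X : MFact.{u, v} A ω σ,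
        letI := phiModule hσ hreg X
        Nonempty ((X.X1 × X.X0) ≃ₗ[Gamma ω σ hσ] M)) := by
  refine ⟨fun X Y => ⟨fun f => ⟨f.toGammaLinear hσ hreg, fun _ => rfl⟩, fun g => ?_⟩,
    fun M _ _ => ⟨MFact.ofGammaModule hσ M, ⟨MFact.phiOfGammaModuleEquiv hσ M hreg⟩⟩⟩
  exact ⟨MFactHom.ofGammaLinear g, gammaLinear_apply_eq_ofGammaLinear g, fun f hf =>
    MFactHom.ext_of_prod_apply fun p =>
      (hf p).symm.trans (gammaLinear_apply_eq_ofGammaLinear g p)⟩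

theorem factorizations_equiv_gamma_modules
    (hσ : ∀ a : A, ω * a = σ a * ω)
    (hreg : ∀ a : A, a * ω = 0 → a = 0) (hreg' : ∀ a : A, ω * a = 0 → a = 0) :
    -- `Φ` is well defined on morphisms, and fully faithful
    (∀ X Y : MFact.{u, v} A ω σ,
      letI := phiModule hσ hreg X
      letI := phiModule hσ hreg Y
      (∀ f : MFactHom X Y,
        ∃ g : (X.X1 × X.X0) →ₗ[Gamma ω σ hσ] (Y.X1 × Y.X0),
          ∀ p : X.X1 × X.X0, g p = (f.f1 p.1, f.f0 p.2)) ∧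
      (∀ g : (X.X1 × X.X0) →ₗ[Gamma ω σ hσ] (Y.X1 × Y.X0),
        ∃! f : MFactHom X Y, ∀ p : X.X1 × X.X0, g p = (f.f1 p.1, f.f0 p.2))) ∧
    -- `Φ` is dense
    (∀ (M : Type v) [AddCommGroup M] [Module (Gamma ω σ hσ) M],
      ∃ X : MFact.{u, v} A ω σ,
        letI := phiModule hσ hreg X
        Nonempty ((X.X1 × X.X0) ≃ₗ[Gamma ω σ hσ] M)) :=
  factorizations_equiv_gamma_modules_general hσ hreg
end

section
/- For the functor θ¹ : A-Mod → F(A; ω) sending M to ( ᵗ⁻¹M, M; ω_{ᵗ⁻¹M}, Id_M ) and the projection pr¹ : F(A; ω) → A-Mod sending X to X¹, both (θ¹, pr¹) and (pr¹, θ⁰) are adjoint pairs. -/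
/-!
STATEMENT 12: For `θ¹ : A-Mod → F(A; ω)`, `M ↦ (ᵗ⁻¹M, M; ω_{ᵗ⁻¹M}, Id_M)`, and the
projection `pr¹ : F(A; ω) → A-Mod`, `X ↦ X¹`, both `(θ¹, pr¹)` and `(pr¹, θ⁰)` are
adjoint pairs.  This is expressed by the two natural bijections (each given by an
explicit unique-existence statement):
`Hom_{F}(θ¹(M), X) ≅ Hom_A(M, X¹)` and `Hom_A(X¹, M) ≅ Hom_{F}(X, θ⁰(M))`.
-/

universe u v

variable {A : Type u} [Ring A] {ω : A} {σ : A ≃+* A}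

variable (ω σ)

/-- The `τ`-twist of a module: a copy of `M`, with the `A`-action `a • m = τ a • m`. -/
@[ext] structure Tw {A : Type u} [Ring A] (τ : A →+* A) (M : Type v) : Type v where
  /-- the element of `M` underlying an element of `Tw τ M` -/
  un : M

/-- The identity map `M → Tw τ M`. -/
def Tw.of {A : Type u} [Ring A] (τ : A →+* A) {M : Type v} (m : M) : Tw τ M := ⟨m⟩

section Tw

variable {A : Type u} [Ring A] (τ : A →+* A) (M : Type v) [AddCommGroup M] [Module A M]

/-- The canonical bijection `Tw τ M ≃ M`. -/
def Tw.equiv : Tw τ M ≃ M := ⟨Tw.un, Tw.of τ, fun _ => rfl, fun _ => rfl⟩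

instance : AddCommGroup (Tw τ M) := (Tw.equiv τ M).addCommGroup

instance : SMul A (Tw τ M) := ⟨fun a m => Tw.of τ (τ a • m.un)⟩

theorem Tw.un_add (x y : Tw τ M) : (x + y).un = x.un + y.un := rfl

theorem Tw.smul_def (a : A) (m : Tw τ M) : a • m = Tw.of τ (τ a • m.un) := rfl

instance : Module A (Tw τ M) :=
  Module.ofMinimalAxioms
    (fun a x y => by
      ext
      show τ a • (x + y).un = (τ a • x.un) + (τ a • y.un)
      rw [Tw.un_add, smul_add])
    (fun a b x => by
      ext
      show τ (a + b) • x.un = (τ a • x.un) + (τ b • x.un)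
      rw [map_add, add_smul])
    (fun a b x => by
      ext
      show τ (a * b) • x.un = τ a • τ b • x.un
      rw [map_mul, mul_smul])
    (fun x => by
      ext
      show τ 1 • x.un = x.un
      rw [map_one, one_smul])

end Tw

/-- The trivial module factorization `θ¹(M) = (ᵗ⁻¹(M), M; ω_{ᵗ⁻¹(M)}, Id_M)`. -/
def theta1 (hσ : ∀ a : A, ω * a = σ a * ω) (hreg : ∀ a : A, a * ω = 0 → a = 0)
    (M : Type v) [AddCommGroup M] [Module A M] : MFact.{u, v} A ω σ where
  X0 := ModuleCat.of A (Tw (σ.symm : A →+* A) M)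
  X1 := ModuleCat.of A M
  d0 :=
    { toFun := fun m => ω • m.un
      map_add' := fun x y => by
        show ω • (x + y).un = ω • x.un + ω • y.un
        rw [Tw.un_add, smul_add]
      map_smul' := fun a m => by
        simp only [RingHom.id_apply]
        show ω • (σ.symm a • m.un) = a • (ω • m.un)
        rw [smul_smul, smul_smul, hσ (σ.symm a), RingEquiv.apply_symm_apply] }
  d1 :=
    { toFun := fun m => Tw.of (σ.symm : A →+* A) m
      map_add' := fun x y => rfl
      map_smul' := fun a m => by
        apply Tw.ext
        show a • m = σ.symm (σ a) • m
        rw [RingEquiv.symm_apply_apply] }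
  comp01 := fun x => by
    have hσω : σ.symm ω = ω := by
      have h2 : (σ ω - ω) * ω = 0 := by rw [sub_mul, ← hσ ω, sub_self]
      have h3 : σ ω = ω := by
        have h4 := hreg _ h2
        rwa [sub_eq_zero] at h4
      rw [← h3, RingEquiv.symm_apply_apply, h3]
    apply Tw.ext
    show ω • x.un = σ.symm ω • x.un
    rw [hσω]
  comp10 := fun x => rfl

/-- The direct sum of two module factorizations. -/
def MFact.prod (X Y : MFact.{u, v} A ω σ) : MFact.{u, v} A ω σ where
  X0 := ModuleCat.of A (X.X0 × Y.X0)
  X1 := ModuleCat.of A (X.X1 × Y.X1)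
  d0 := X.d0.prodMap Y.d0
  d1 :=
    { toFun := fun p => (X.d1 p.1, Y.d1 p.2)
      map_add' := fun p q => by
        show (X.d1 (p.1 + q.1), Y.d1 (p.2 + q.2)) = _
        rw [map_add, map_add]; rfl
      map_smul' := fun a p => by
        show (X.d1 (a • p.1), Y.d1 (a • p.2)) = _
        rw [X.d1.map_smulₛₗ, Y.d1.map_smulₛₗ]; rfl }
  comp01 := fun p => by
    show (X.d1 (X.d0 p.1), Y.d1 (Y.d0 p.2)) = ω • p
    rw [X.comp01, Y.comp01]; rfl
  comp10 := fun p => by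
    show (X.d0 (X.d1 p.1), Y.d0 (Y.d1 p.2)) = ω • p
    rw [X.comp10, Y.comp10]; rfl

section Adjunctions

/- The differential `d¹` of `θ¹(M)` and `d⁰` of `θ⁰(M)` are identities, so a morphism out of
`θ¹(M)` or into `θ⁰(M)` is determined by its degree-one component. -/

variable {ω σ} (hσ : ∀ a : A, ω * a = σ a * ω) (hreg : ∀ a : A, a * ω = 0 → a = 0)
  {M : Type v} [AddCommGroup M] [Module A M] {X : MFact.{u, v} A ω σ}

def MFactHom.fromTheta1 (g : M →ₗ[A] X.X1) : MFactHom (theta1 ω σ hσ hreg M) X where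
  f0 :=
    { toFun := fun m => X.d1 (g m.un)
      map_add' := fun x y => by
        show X.d1 (g (x.un + y.un)) = X.d1 (g x.un) + X.d1 (g y.un)
        rw [map_add, map_add]
      map_smul' := fun a m => by
        show X.d1 (g (σ.symm a • m.un)) = a • X.d1 (g m.un)
        rw [map_smul, X.d1.map_smulₛₗ, RingHom.coe_coe, RingEquiv.apply_symm_apply] }
  f1 := g
  comm0 := fun m => by
    show g (ω • m.un) = X.d0 (X.d1 (g m.un))
    rw [map_smul, X.comp10]
  comm1 := fun _ => rfl

theorem MFactHom.f0_eq_d1_f1_of_theta1 (f : MFactHom (theta1 ω σ hσ hreg M) X)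
    (m : Tw (σ.symm : A →+* A) M) : f.f0 m = X.d1 (f.f1 m.un) :=
  f.comm1 m.un

theorem MFactHom.ext_of_theta1 {f f' : MFactHom (theta1 ω σ hσ hreg M) X}
    (h : ∀ m : M, f.f1 m = f'.f1 m) : f = f' := by
  ext m
  · rw [f.f0_eq_d1_f1_of_theta1 hσ hreg m, f'.f0_eq_d1_f1_of_theta1 hσ hreg m, h]
  · exact h m

def MFactHom.toTheta0 (g : X.X1 →ₗ[A] M) : MFactHom X (theta0 ω σ hσ M) where
  f0 := g ∘ₗ X.d0
  f1 := g
  comm0 := fun _ => rfl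
  comm1 := fun x => by
    show g (X.d0 (X.d1 x)) = ω • g x
    rw [X.comp10, map_smul]

theorem MFactHom.f0_eq_f1_d0_of_theta0 (f : MFactHom X (theta0 ω σ hσ M)) (x : X.X0) :
    f.f0 x = f.f1 (X.d0 x) :=
  (f.comm0 x).symm

theorem MFactHom.ext_of_theta0 {f f' : MFactHom X (theta0 ω σ hσ M)}
    (h : ∀ x : X.X1, f.f1 x = f'.f1 x) : f = f' := by
  ext x
  · rw [f.f0_eq_f1_d0_of_theta0 hσ x, f'.f0_eq_f1_d0_of_theta0 hσ x, h]
  · exact h x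

end Adjunctions

theorem theta1_pr1_theta0_adjunctions_general {A : Type u} [Ring A] (ω : A) (σ : A ≃+* A)
    (hσ : ∀ a : A, ω * a = σ a * ω)
    (hreg : ∀ a : A, a * ω = 0 → a = 0)
    (M : Type v) [AddCommGroup M] [Module A M] (X : MFact.{u, v} A ω σ) :
    -- the adjunction (θ¹, pr¹): morphisms θ¹(M) → X correspond to maps M → X¹
    (∀ g : M →ₗ[A] X.X1,
      ∃! f : MFactHom (theta1 ω σ hσ hreg M) X,
        (∀ m : M, f.f1 m = g m) ∧
        (∀ m : Tw (σ.symm : A →+* A) M, f.f0 m = X.d1 (g m.un))) ∧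
    (∀ f : MFactHom (theta1 ω σ hσ hreg M) X, ∃ g : M →ₗ[A] X.X1,
        ∀ m : M, f.f1 m = g m) ∧
    -- the adjunction (pr¹, θ⁰): maps X¹ → M correspond to morphisms X → θ⁰(M)
    (∀ g : X.X1 →ₗ[A] M,
      ∃! f : MFactHom X (theta0 ω σ hσ M),
        (∀ x : X.X1, f.f1 x = g x) ∧ (∀ x : X.X0, f.f0 x = g (X.d0 x))) ∧
    (∀ f : MFactHom X (theta0 ω σ hσ M), ∃ g : X.X1 →ₗ[A] M,
        ∀ x : X.X1, f.f1 x = g x) :=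
  ⟨fun g => ⟨MFactHom.fromTheta1 hσ hreg g, ⟨fun _ => rfl, fun _ => rfl⟩,
      fun _ hf => MFactHom.ext_of_theta1 hσ hreg hf.1⟩,
    fun f => ⟨f.f1, fun _ => rfl⟩,
    fun g => ⟨MFactHom.toTheta0 hσ g, ⟨fun _ => rfl, fun _ => rfl⟩,
      fun _ hf => MFactHom.ext_of_theta0 hσ hf.1⟩,
    fun f => ⟨f.f1, fun _ => rfl⟩⟩

theorem theta1_pr1_theta0_adjunctions {A : Type u} [Ring A] (ω : A) (σ : A ≃+* A)
    (hσ : ∀ a : A, ω * a = σ a * ω)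
    (hreg : ∀ a : A, a * ω = 0 → a = 0) (hreg' : ∀ a : A, ω * a = 0 → a = 0)
    (M : Type v) [AddCommGroup M] [Module A M] (X : MFact.{u, v} A ω σ) :
    -- the adjunction (θ¹, pr¹): morphisms θ¹(M) → X correspond to maps M → X¹
    (∀ g : M →ₗ[A] X.X1,
      ∃! f : MFactHom (theta1 ω σ hσ hreg M) X,
        (∀ m : M, f.f1 m = g m) ∧
        (∀ m : Tw (σ.symm : A →+* A) M, f.f0 m = X.d1 (g m.un))) ∧
    (∀ f : MFactHom (theta1 ω σ hσ hreg M) X, ∃ g : M →ₗ[A] X.X1,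
        ∀ m : M, f.f1 m = g m) ∧
    -- the adjunction (pr¹, θ⁰): maps X¹ → M correspond to morphisms X → θ⁰(M)
    (∀ g : X.X1 →ₗ[A] M,
      ∃! f : MFactHom X (theta0 ω σ hσ M),
        (∀ x : X.X1, f.f1 x = g x) ∧ (∀ x : X.X0, f.f0 x = g (X.d0 x))) ∧
    (∀ f : MFactHom X (theta0 ω σ hσ M), ∃ g : X.X1 →ₗ[A] M,
        ∀ x : X.X1, f.f1 x = g x) :=
  theta1_pr1_theta0_adjunctions_general ω σ hσ hreg M X
end
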